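/- arXiv:2603.20923 — 2 statements merged into one kernel-verified Lean document; each statement's English description precedes it below -/
import Mathlib

section
/- Let (Y,θ) be a generating system of nondegenerate regular A-correspondences, let γ denote the gauge action of 𝕋 on O_{Y_1}, and let ℰY_2 = Y_2 ⊗_A O_{Y_1} be the O_{Y_1}-correspondence with left action determined by θ_{12}. Then for every z ∈ 𝕋 the pair (γ_z, 1_{Y_2} ⊗ γ_z) is a C*-correspondence automorphism of ℰY_2: it satisfies (1_{Y_2} ⊗ γ_z)(T · ξ) = γ_z(T) · (1_{Y_2} ⊗ γ_z)(ξ), ⟨(1_{Y_2} ⊗ γ_z)ξ, (1_{Y_2} ⊗ γ_z)η⟩_{O_{Y_1}} = γ_z(⟨ξ,η⟩_{O_{Y_1}}) for all T ∈ O_{Y_1} and ξ,η ∈ ℰY_2, and is surjective. -/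
/- ############################################################
   Common framework: C*-correspondences, interior tensor products
   (characterized relationally), representations, Cuntz–Pimsner algebras,
   product systems over ℕ^k, generating systems, and the ℰ / ℛθ
   constructions of the paper (characterized relationally).
   ############################################################ -/

noncomputable section

open Filter Topology

universe u

/-- A C*-correspondence over a (not necessarily unital) C*-algebra `A`:
a right Hilbert `A`-module `X` together with a left action of `A` by
adjointable (bounded) operators.  The rank-one operators `θ_{x,y}` are
bundled as data together with their defining property. -/
structure Corr (A : Type u) [NonUnitalCStarAlgebra A] : Type (u + 1) where
  X : Type u
  [nacg : NormedAddCommGroup X]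
  [nsp : NormedSpace ℂ X]
  [cmpl : CompleteSpace X]
  /-- right action of `A` -/
  ract : X → A → X
  /-- `A`-valued inner product -/
  inner : X → X → A
  /-- left action `φ : A → L(X)` by adjointable operators -/
  lactL : A → X →L[ℂ] X
  /-- the rank-one ("compact") operators `θ_{x,y} z = x ⬝ ⟨y, z⟩` -/
  rankOne : X → X → X →L[ℂ] X
  ract_add_left : ∀ x y a, ract (x + y) a = ract x a + ract y a
  ract_add_right : ∀ x a b, ract x (a + b) = ract x a + ract x b
  ract_mul : ∀ x a b, ract x (a * b) = ract (ract x a) b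
  ract_smul : ∀ (c : ℂ) x a, ract (c • x) a = c • ract x a
  ract_smul' : ∀ (c : ℂ) x a, ract x (c • a) = c • ract x a
  inner_add_right : ∀ x y z, inner x (y + z) = inner x y + inner x z
  inner_smul_right : ∀ (c : ℂ) x y, inner x (c • y) = c • inner x y
  inner_star : ∀ x y, star (inner x y) = inner y x
  inner_ract_right : ∀ x y a, inner x (ract y a) = inner x y * a
  norm_eq : ∀ x, ‖x‖ ^ 2 = ‖inner x x‖
  lact_add : ∀ a b, lactL (a + b) = lactL a + lactL b
  lact_mul : ∀ a b, lactL (a * b) = (lactL a).comp (lactL b)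
  lact_smul : ∀ (c : ℂ) a, lactL (c • a) = c • lactL a
  lact_adjoint : ∀ a x y, inner (lactL a x) y = inner x (lactL (star a) y)
  rankOne_apply : ∀ x y z, rankOne x y z = ract x (inner y z)

attribute [instance] Corr.nacg Corr.nsp Corr.cmpl

variable {A : Type u} [NonUnitalCStarAlgebra A]

/-- Nondegeneracy: `A·X` is (topologically) all of `X`. -/
def Corr.Nondeg (W : Corr A) : Prop :=
  closure (Submodule.span ℂ {y : W.X | ∃ a x, y = W.lactL a x} : Set W.X) = Set.univ

/-- Regularity: the left action is injective and takes values in the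
compact operators (the closed span of the rank-one operators). -/
def Corr.Regular (W : Corr A) : Prop :=
  (∀ a, W.lactL a = 0 → a = 0) ∧
    ∀ a, W.lactL a ∈
      closure (Submodule.span ℂ {T : W.X →L[ℂ] W.X | ∃ x y, T = W.rankOne x y} :
        Set (W.X →L[ℂ] W.X))

/-- standing hypotheses of the paper: nondegenerate and regular -/
def Corr.Reg (W : Corr A) : Prop := W.Nondeg ∧ W.Regular

/-- a bare function which is a continuous `ℂ`-linear map -/
structure IsCLMap {E F : Type u} [NormedAddCommGroup E] [NormedSpace ℂ E]
    [NormedAddCommGroup F] [NormedSpace ℂ F] (f : E → F) : Prop where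
  map_add : ∀ x y, f (x + y) = f x + f y
  map_smul : ∀ (c : ℂ) x, f (c • x) = c • f x
  cont : Continuous f

/-- a map of correspondences over the same algebra which is an isomorphism -/
structure IsCorrIsoFun (W Z : Corr A) (f : W.X → Z.X) : Prop where
  bijective : Function.Bijective f
  map_add : ∀ x y, f (x + y) = f x + f y
  map_smul : ∀ (c : ℂ) x, f (c • x) = c • f x
  map_inner : ∀ x y, Z.inner (f x) (f y) = W.inner x y
  map_ract : ∀ x a, f (W.ract x a) = Z.ract (f x) a
  map_lact : ∀ a x, f (W.lactL a x) = Z.lactL a (f x)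

/-- an isomorphism of correspondences over the same algebra (bundled) -/
structure CorrIso (W Z : Corr A) : Type u where
  toFun : W.X → Z.X
  invFun : Z.X → W.X
  left_inv : ∀ x, invFun (toFun x) = x
  right_inv : ∀ y, toFun (invFun y) = y
  map_add : ∀ x y, toFun (x + y) = toFun x + toFun y
  map_smul : ∀ (c : ℂ) x, toFun (c • x) = c • toFun x
  map_inner : ∀ x y, Z.inner (toFun x) (toFun y) = W.inner x y
  map_ract : ∀ x a, toFun (W.ract x a) = Z.ract (toFun x) a
  map_lact : ∀ a x, toFun (W.lactL a x) = Z.lactL a (toFun x)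

/-- an isomorphism of correspondences lying over an isomorphism `Φ` of the
coefficient algebras -/
structure CorrIsoOver {B : Type u} [NonUnitalCStarAlgebra B]
    (Φ : A → B) (W : Corr A) (Z : Corr B) : Type u where
  toFun : W.X → Z.X
  bijective : Function.Bijective toFun
  map_add : ∀ x y, toFun (x + y) = toFun x + toFun y
  map_smul : ∀ (c : ℂ) x, toFun (c • x) = c • toFun x
  map_inner : ∀ x y, Z.inner (toFun x) (toFun y) = Φ (W.inner x y)
  map_ract : ∀ x a, toFun (W.ract x a) = Z.ract (toFun x) (Φ a)
  map_lact : ∀ a x, toFun (W.lactL a x) = Z.lactL (Φ a) (toFun x)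

/-- `T`, together with the bilinear map `m`, is a realization of the
balanced (interior) tensor product `W ⊗_A V` of correspondences over `A`. -/
structure IsTensor (W V T : Corr A) (m : W.X → V.X → T.X) : Prop where
  add_left : ∀ x x' y, m (x + x') y = m x y + m x' y
  add_right : ∀ x y y', m x (y + y') = m x y + m x y'
  smul_left : ∀ (c : ℂ) x y, m (c • x) y = c • m x y
  smul_right : ∀ (c : ℂ) x y, m x (c • y) = c • m x y
  balanced : ∀ x a y, m (W.ract x a) y = m x (V.lactL a y)
  inner : ∀ x y x' y',
    T.inner (m x y) (m x' y') = V.inner y (V.lactL (W.inner x x') y')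
  ract : ∀ x y a, T.ract (m x y) a = m x (V.ract y a)
  lact : ∀ a x y, T.lactL a (m x y) = m (W.lactL a x) y
  dense : closure (Submodule.span ℂ {z : T.X | ∃ x y, z = m x y} : Set T.X) = Set.univ

variable {B : Type u} [NonUnitalCStarAlgebra B]

/-- `π : A → B` is a *-homomorphism (stated elementwise) -/
structure IsStarHom (π : A → B) : Prop where
  map_add : ∀ a b, π (a + b) = π a + π b
  map_mul : ∀ a b, π (a * b) = π a * π b
  map_star : ∀ a, π (star a) = star (π a)
  map_smul : ∀ (c : ℂ) a, π (c • a) = c • π a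

/-- `(π, t)` is a representation (Toeplitz representation) of the
correspondence `W` in the C*-algebra `B`. -/
structure IsRep (W : Corr A) (π : A → B) (t : W.X → B) : Prop where
  hom : IsStarHom π
  t_add : ∀ x y, t (x + y) = t x + t y
  t_smul : ∀ (c : ℂ) x, t (c • x) = c • t x
  lact : ∀ a x, t (W.lactL a x) = π a * t x
  ract : ∀ x a, t (W.ract x a) = t x * π a
  inner : ∀ x y, star (t x) * t y = π (W.inner x y)

/-- Cuntz–Pimsner covariance of a representation of a *regular*
correspondence: whenever `φ(a)` is approximated in norm by finite sums of
rank-one operators `θ_{x,y}`, `π(a)` is approximated by the corresponding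
sums `t(x) t(y)*`.  (For regular correspondences this is equivalent to
`π = t⁽¹⁾ ∘ φ`.) -/
def CPCov (W : Corr A) (π : A → B) (t : W.X → B) : Prop :=
  ∀ (a : A) (N : ℕ → ℕ) (x y : ∀ n, Fin (N n) → W.X),
    Tendsto (fun n => ∑ r, W.rankOne (x n r) (y n r)) atTop (𝓝 (W.lactL a)) →
    Tendsto (fun n => ∑ r, t (x n r) * star (t (y n r))) atTop (𝓝 (π a))

/-- The Cuntz–Pimsner algebra of a correspondence `W`: a C*-algebra `O`
together with a universal covariant representation `(π, t)`:  `(π,t)` is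
covariant, `π` is injective, `O` is generated by the images of `π` and `t`,
and every covariant representation factors uniquely through `O`. -/
structure CPAlg (W : Corr A) : Type (u + 1) where
  O : Type u
  [alg : NonUnitalCStarAlgebra O]
  π : A → O
  t : W.X → O
  isRep : IsRep W π t
  covariant : CPCov W π t
  inj : Function.Injective π
  gen : ∀ S : Set O, IsClosed S →
    (∀ a, π a ∈ S) → (∀ x, t x ∈ S) →
    (∀ p q, p ∈ S → q ∈ S → p + q ∈ S) →
    (∀ p q, p ∈ S → q ∈ S → p * q ∈ S) →
    (∀ (c : ℂ) p, p ∈ S → c • p ∈ S) →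
    (∀ p, p ∈ S → star p ∈ S) → ∀ z, z ∈ S
  universal : ∀ (C : Type u) [NonUnitalCStarAlgebra C],
    ∀ (π' : A → C) (t' : W.X → C), IsRep W π' t' → CPCov W π' t' →
      ∃! h : O →⋆ₙₐ[ℂ] C, (∀ a, h (π a) = π' a) ∧ ∀ x, h (t x) = t' x

attribute [instance] CPAlg.alg

/- ##################  product systems over ℕ^k  ################## -/

/-- the `i`-th standard generator of `ℕ^k` -/
def egen {k : ℕ} (i : Fin k) : Fin k → ℕ := Pi.single i 1

/-- A product system over `ℕ^k` of (nondegenerate regular) correspondences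
over `A`:  fibers `fib s`, an associative multiplication implementing
isomorphisms `fib s ⊗_A fib t ≅ fib (s+t)`, and `fib 0 = A` (witnessed by
the unit map). -/
structure PSys (A : Type u) [NonUnitalCStarAlgebra A] (k : ℕ) : Type (u + 1) where
  fib : (Fin k → ℕ) → Corr A
  reg : ∀ s, (fib s).Reg
  mul : ∀ s t, (fib s).X → (fib t).X → (fib (s + t)).X
  isTensor : ∀ s t, IsTensor (fib s) (fib t) (fib (s + t)) (mul s t)
  assoc : ∀ s t u x y z,
    HEq (mul (s + t) u (mul s t x y) z) (mul s (t + u) x (mul t u y z))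
  unit : A → (fib 0).X
  unit_bij : Function.Bijective unit
  unit_add : ∀ a b, unit (a + b) = unit a + unit b
  unit_smul : ∀ (c : ℂ) a, unit (c • a) = c • unit a
  unit_inner : ∀ a b, (fib 0).inner (unit a) (unit b) = star a * b
  unit_lact : ∀ a b, (fib 0).lactL a (unit b) = unit (a * b)
  unit_ract : ∀ a b, (fib 0).ract (unit a) b = unit (a * b)
  unit_mul_left : ∀ s a x, HEq (mul 0 s (unit a) x) ((fib s).lactL a x)
  unit_mul_right : ∀ s x a, HEq (mul s 0 x (unit a)) ((fib s).ract x a)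

/-- a representation of a product system in a C*-algebra `B` -/
structure PSRep {k : ℕ} (Xs : PSys A k) (B : Type u) [NonUnitalCStarAlgebra B] :
    Type u where
  π : A → B
  ψ : ∀ s, (Xs.fib s).X → B
  isRep : ∀ s, IsRep (Xs.fib s) π (ψ s)
  ψ_zero : ∀ a, ψ 0 (Xs.unit a) = π a
  mul : ∀ s t x y, ψ s x * ψ t y = ψ (s + t) (Xs.mul s t x y)

/-- Cuntz–Pimsner covariance of a representation of a product system -/
def PSCPCov {k : ℕ} {Xs : PSys A k} {B : Type u} [NonUnitalCStarAlgebra B]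
    (r : PSRep Xs B) : Prop :=
  ∀ s, CPCov (Xs.fib s) r.π (r.ψ s)

/-- The Cuntz–Pimsner algebra `𝒪(X)` of a product system. -/
structure PSCPAlg {k : ℕ} (Xs : PSys A k) : Type (u + 1) where
  O : Type u
  [alg : NonUnitalCStarAlgebra O]
  rep : PSRep Xs O
  covariant : PSCPCov rep
  inj : Function.Injective rep.π
  gen : ∀ S : Set O, IsClosed S →
    (∀ a, rep.π a ∈ S) → (∀ s x, rep.ψ s x ∈ S) →
    (∀ p q, p ∈ S → q ∈ S → p + q ∈ S) →
    (∀ p q, p ∈ S → q ∈ S → p * q ∈ S) →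
    (∀ (c : ℂ) p, p ∈ S → c • p ∈ S) →
    (∀ p, p ∈ S → star p ∈ S) → ∀ z, z ∈ S
  universal : ∀ (C : Type u) [NonUnitalCStarAlgebra C],
    ∀ r : PSRep Xs C, PSCPCov r →
      ∃! h : O →⋆ₙₐ[ℂ] C,
        (∀ a, h (rep.π a) = r.π a) ∧ ∀ s x, h (rep.ψ s x) = r.ψ s x

attribute [instance] PSCPAlg.alg

/- ##################  generating systems  ################## -/

/-- a realization of a triple tensor product `W1 ⊗ W2 ⊗ W3` carrying both
a left pairing `(W1 ⊗ W2) ⊗ W3` and a right pairing `W1 ⊗ (W2 ⊗ W3)` -/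
structure Trip (W1 W2 W3 : Corr A) (T12 : Corr A) (m12 : W1.X → W2.X → T12.X)
    (T23 : Corr A) (m23 : W2.X → W3.X → T23.X) (P : Corr A) : Type u where
  lp : T12.X → W3.X → P.X
  rp : W1.X → T23.X → P.X
  lt : IsTensor T12 W3 P lp
  rt : IsTensor W1 T23 P rp
  compat : ∀ x y z, lp (m12 x y) z = rp x (m23 y z)

/-- the hexagonal relation for a triple of flip isomorphisms
`θij, θil, θjl`, stated relative to arbitrary realizations of the six
triple tensor products. -/
def HexProp (Yi Yj Yl : Corr A)
    (Tij Tji Til Tli Tjl Tlj : Corr A)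
    (mij : Yi.X → Yj.X → Tij.X) (mji : Yj.X → Yi.X → Tji.X)
    (mil : Yi.X → Yl.X → Til.X) (mli : Yl.X → Yi.X → Tli.X)
    (mjl : Yj.X → Yl.X → Tjl.X) (mlj : Yl.X → Yj.X → Tlj.X)
    (θij : Tij.X → Tji.X) (θil : Til.X → Tli.X) (θjl : Tjl.X → Tlj.X) : Prop :=
  ∀ (P1 P2 P3 P4 P5 P6 : Corr A)
    (R1 : Trip Yi Yj Yl Tij mij Tjl mjl P1)
    (R2 : Trip Yj Yi Yl Tji mji Til mil P2)
    (R3 : Trip Yj Yl Yi Tjl mjl Tli mli P3)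
    (R4 : Trip Yl Yj Yi Tlj mlj Tji mji P4)
    (R5 : Trip Yi Yl Yj Til mil Tlj mlj P5)
    (R6 : Trip Yl Yi Yj Tli mli Tij mij P6)
    (F1 : P1.X → P2.X) (F2 : P2.X → P3.X) (F3 : P3.X → P4.X)
    (F4 : P1.X → P5.X) (F5 : P5.X → P6.X) (F6 : P6.X → P4.X),
    IsCLMap F1 → IsCLMap F2 → IsCLMap F3 →
    IsCLMap F4 → IsCLMap F5 → IsCLMap F6 →
    (∀ u z, F1 (R1.lp u z) = R2.lp (θij u) z) →
    (∀ y v, F2 (R2.rp y v) = R3.rp y (θil v)) →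
    (∀ u z, F3 (R3.lp u z) = R4.lp (θjl u) z) →
    (∀ x v, F4 (R1.rp x v) = R5.rp x (θjl v)) →
    (∀ u z, F5 (R5.lp u z) = R6.lp (θil u) z) →
    (∀ x v, F6 (R6.rp x v) = R4.rp x (θij v)) →
    ∀ w, F3 (F2 (F1 w)) = F6 (F5 (F4 w))

/-- A generating system `(Y, θ)` of `k` correspondences over `A`:
correspondences `Y i`, chosen realizations `T i j` of the tensor products
`Y i ⊗_A Y j`, and flip isomorphisms `θ i j : Y i ⊗ Y j → Y j ⊗ Y i` with
`θ i i = id`, `θ j i = (θ i j)⁻¹`, satisfying the hexagonal relations. -/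
structure GenSys (A : Type u) [NonUnitalCStarAlgebra A] (k : ℕ) : Type (u + 1) where
  Y : Fin k → Corr A
  reg : ∀ i, (Y i).Reg
  T : Fin k → Fin k → Corr A
  tmul : ∀ i j, (Y i).X → (Y j).X → (T i j).X
  isTensor : ∀ i j, IsTensor (Y i) (Y j) (T i j) (tmul i j)
  θ : ∀ i j, CorrIso (T i j) (T j i)
  θ_diag : ∀ i x y, (θ i i).toFun (tmul i i x y) = tmul i i x y
  θ_symm : ∀ i j z, (θ j i).toFun ((θ i j).toFun z) = z
  hex : ∀ i j l, HexProp (Y i) (Y j) (Y l) (T i j) (T j i) (T i l) (T l i)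
    (T j l) (T l j) (tmul i j) (tmul j i) (tmul i l) (tmul l i) (tmul j l)
    (tmul l j) ((θ i j).toFun) ((θ i l).toFun) ((θ j l).toFun)

/-- the generating system obtained by keeping only `Y 1, …, Y m` -/
def GenSys.restrict {k : ℕ} (G : GenSys A k) (m : ℕ) (h : m ≤ k) : GenSys A m where
  Y i := G.Y (Fin.castLE h i)
  reg i := G.reg _
  T i j := G.T (Fin.castLE h i) (Fin.castLE h j)
  tmul i j := G.tmul _ _
  isTensor i j := G.isTensor _ _
  θ i j := G.θ _ _
  θ_diag i := G.θ_diag _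
  θ_symm i j := G.θ_symm _ _
  hex i j l := G.hex _ _ _

/-- `X` is *the* product system (over `ℕ^k`) generated by the generating
system `G` (Fowler–Sims); witnessed by compatible isomorphisms on the
generating fibers. -/
structure Generates {k : ℕ} (G : GenSys A k) (Xs : PSys A k) : Type u where
  ι : ∀ i, CorrIso (G.Y i) (Xs.fib (egen i))
  κ : ∀ i j, CorrIso (G.T i j) (Xs.fib (egen i + egen j))
  κ_mul : ∀ i j x y,
    (κ i j).toFun (G.tmul i j x y) =
      Xs.mul (egen i) (egen j) ((ι i).toFun x) ((ι j).toFun y)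
  θ_compat : ∀ i j z,
    HEq ((κ j i).toFun ((G.θ i j).toFun z)) ((κ i j).toFun z)

/- ############  mixed tensor products `W ⊗_A O` and `W ⊗_A V`  ############ -/

/-- `Z` (a correspondence over the C*-algebra `O`), with map `m`, is a
realization of the right Hilbert `O`-module `W ⊗_A O`, where `O` is an
`A`-algebra via `πA`.  (No condition on the left action of `O` on `Z`.) -/
structure MixedMod (W : Corr A) (O : Type u) [NonUnitalCStarAlgebra O]
    (πA : A → O) (Z : Corr O) (m : W.X → O → Z.X) : Prop where
  add_left : ∀ x x' S, m (x + x') S = m x S + m x' S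
  add_right : ∀ x S S', m x (S + S') = m x S + m x S'
  smul_left : ∀ (c : ℂ) x S, m (c • x) S = c • m x S
  smul_right : ∀ (c : ℂ) x S, m x (c • S) = c • m x S
  balanced : ∀ x a S, m (W.ract x a) S = m x (πA a * S)
  ract : ∀ x S T, Z.ract (m x S) T = m x (S * T)
  inner : ∀ x S y T, Z.inner (m x S) (m y T) = star S * (πA (W.inner x y) * T)
  dense : closure (Submodule.span ℂ {z : Z.X | ∃ x S, z = m x S} : Set Z.X) = Set.univ

/-- `P`, with pairing `p`, is a realization of the balanced tensor product
`W ⊗_A V` where `W` is a correspondence over `A` and `V` a correspondence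
over the `A`-algebra `O` (via `πA`); the left `A`-action is `πA`-compatible. -/
structure MixedPair (W : Corr A) {O : Type u} [NonUnitalCStarAlgebra O]
    (πA : A → O) (V P : Corr O) (p : W.X → V.X → P.X) : Prop where
  add_left : ∀ x x' v, p (x + x') v = p x v + p x' v
  add_right : ∀ x v v', p x (v + v') = p x v + p x v'
  smul_left : ∀ (c : ℂ) x v, p (c • x) v = c • p x v
  smul_right : ∀ (c : ℂ) x v, p x (c • v) = c • p x v
  balanced : ∀ x a v, p (W.ract x a) v = p x (V.lactL (πA a) v)
  inner : ∀ x v x' v',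
    P.inner (p x v) (p x' v') = V.inner v (V.lactL (πA (W.inner x x')) v')
  ract : ∀ x v S, P.ract (p x v) S = p x (V.ract v S)
  lact_pi : ∀ a x v, P.lactL (πA a) (p x v) = p (W.lactL a x) v
  dense : closure (Submodule.span ℂ {z : P.X | ∃ x v, z = p x v} : Set P.X) = Set.univ

/- ############  the correspondence `ℰYᵢ = Yᵢ ⊗_A 𝒪(Y₁)`  ############ -/

/-- `Z = Yi ⊗_A 𝒪(Y1)` with the left `𝒪(Y1)`-action determined by the flip
`θ : Y1 ⊗ Yi → Yi ⊗ Y1` (`T` and `T'` are realizations of these tensor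
products):  `π(a)` acts by `φ(a) ⊗ 1`, and `t(x)·(y ⊗ S) = (1 ⊗ V)(θ ⊗ 1)
(x ⊗ y ⊗ S)`. -/
structure ECorrData (Y1 Yi : Corr A)
    (T : Corr A) (mT : Y1.X → Yi.X → T.X)
    (T' : Corr A) (mT' : Yi.X → Y1.X → T'.X)
    (θ : T.X → T'.X)
    (C : CPAlg Y1) (Z : Corr C.O) (m : Yi.X → C.O → Z.X) : Prop where
  mod : MixedMod Yi C.O C.π Z m
  lact_pi : ∀ a y S, Z.lactL (C.π a) (m y S) = m (Yi.lactL a y) S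
  lact_t : ∃ μ : T'.X → C.O → Z.X,
    (∀ S, IsCLMap fun u => μ u S) ∧
    (∀ y u S, μ (mT' y u) S = m y (C.t u * S)) ∧
    ∀ x y S, Z.lactL (C.t x) (m y S) = μ (θ (mT x y)) S

/-- `Z = Yi ⊗_A 𝒪(Y p)` for a generating system `G`, with left action
determined by `θ p i` -/
def ECorr {k : ℕ} (G : GenSys A k) (p i : Fin k) (C : CPAlg (G.Y p))
    (Z : Corr C.O) (m : (G.Y i).X → C.O → Z.X) : Prop :=
  ECorrData (G.Y p) (G.Y i) (G.T p i) (G.tmul p i) (G.T i p) (G.tmul i p)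
    ((G.θ p i).toFun) C Z m

/-- `Z = Y j ⊗_A 𝒪(Y 1 ∗ ⋯ ∗ Y m)` with the left action of the
Cuntz–Pimsner algebra of the product system determined on the generators
`σ i = ψ_{e i}` via the flips `θ i j` and the absorption maps. -/
structure EPCorr {k : ℕ} (G : GenSys A k) {m : ℕ} (hm : m ≤ k)
    (Xs : PSys A m) (gen : Generates (G.restrict m hm) Xs) (C : PSCPAlg Xs)
    (j : Fin k) (Z : Corr C.O) (mm : (G.Y j).X → C.O → Z.X) : Prop where
  mod : MixedMod (G.Y j) C.O C.rep.π Z mm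
  lact_pi : ∀ a y S, Z.lactL (C.rep.π a) (mm y S) = mm ((G.Y j).lactL a y) S
  lact_t : ∀ i : Fin m,
    ∃ μ : (G.T j (Fin.castLE hm i)).X → C.O → Z.X,
      (∀ S, IsCLMap fun u => μ u S) ∧
      (∀ y u S, μ (G.tmul j (Fin.castLE hm i) y u) S =
        mm y (C.rep.ψ (egen i) ((gen.ι i).toFun u) * S)) ∧
      ∀ x y S, Z.lactL (C.rep.ψ (egen i) ((gen.ι i).toFun x)) (mm y S) =
        μ ((G.θ (Fin.castLE hm i) j).toFun (G.tmul (Fin.castLE hm i) j x y)) S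

/- ############  the isomorphism `ℛθ = ν⁻¹ (θ ⊗ 1) ν`  ############ -/

/-- Witness data expressing that `R : Zi ⊗_O Zj → Zj ⊗_O Zi` is the map
`ℛθ_{ij} = ν_{ji}⁻¹ (θ_{ij} ⊗ 1_O) ν_{ij}` of the paper, where
`Zi = Yi ⊗_A O`, `O = 𝒪(Y1)`, and `ν_{ij} : (Yi ⊗ O) ⊗_O (Yj ⊗ O) ≅
Yi ⊗ Yj ⊗ O` is the canonical absorption isomorphism. -/
structure RTheta (O : Type u) [NonUnitalCStarAlgebra O] (πA : A → O)
    (Yi Yj : Corr A) (Tij Tji : Corr A)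
    (mij : Yi.X → Yj.X → Tij.X) (mji : Yj.X → Yi.X → Tji.X)
    (θij : Tij.X → Tji.X)
    (Zi Zj : Corr O) (mmi : Yi.X → O → Zi.X) (mmj : Yj.X → O → Zj.X)
    (TZ TZr : Corr O) (mZ : Zi.X → Zj.X → TZ.X) (mZr : Zj.X → Zi.X → TZr.X)
    (R : TZ.X → TZr.X) : Type (u + 1) where
  Pl : Corr O
  Pr : Corr O
  pij : Yi.X → Zj.X → Pl.X
  pji : Yj.X → Zi.X → Pr.X
  hp : MixedPair Yi πA Zj Pl pij
  hpr : MixedPair Yj πA Zi Pr pji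
  q : Tij.X → O → Pl.X
  qr : Tji.X → O → Pr.X
  hq : MixedMod Tij O πA Pl q
  hqr : MixedMod Tji O πA Pr qr
  q_compat : ∀ x y S, q (mij x y) S = pij x (mmj y S)
  q_compatr : ∀ y x S, qr (mji y x) S = pji y (mmi x S)
  ν : TZ.X → Pl.X
  νr : TZr.X → Pr.X
  hν : IsCLMap ν ∧ Function.Bijective ν ∧
    ∀ x S ζ, ν (mZ (mmi x S) ζ) = pij x (Zj.lactL S ζ)
  hνr : IsCLMap νr ∧ Function.Bijective νr ∧
    ∀ y S ζ, νr (mZr (mmj y S) ζ) = pji y (Zi.lactL S ζ)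
  Θ : Pl.X → Pr.X
  hΘ : IsCLMap Θ ∧ ∀ u S, Θ (q u S) = qr (θij u) S
  hR : ∀ z, νr (R z) = Θ (ν z)

/-- the gauge action of `𝕋` on the Cuntz–Pimsner algebra of a correspondence -/
def IsGaugeAut {A : Type u} [NonUnitalCStarAlgebra A] {W : Corr A}
    (C : CPAlg W) (γ : ℂ → C.O → C.O) : Prop :=
  ∀ z : ℂ, ‖z‖ = 1 →
    IsStarHom (γ z) ∧ Function.Bijective (γ z) ∧
      (∀ x, γ z (C.t x) = z • C.t x) ∧ ∀ a, γ z (C.π a) = C.π a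

/-! The map `1 ⊗ γ_z` is first defined on the span of elementary tensors `y ⊗ S ↦ y ⊗ γ_z(S)`.
Since `γ_z` is a *-homomorphism fixing `π(A)`, it transforms the `𝒪(Y₁)`-valued inner products
of such sums by `γ_z`; being contractive, it extends by continuity, and `1 ⊗ γ_{z̄}` is its
inverse. The intertwining relation `(1 ⊗ γ_z)(T·ξ) = γ_z(T)·(1 ⊗ γ_z)(ξ)` is checked on the
generators: for `π(a)` it is immediate from the form of the left action, and for `t(x)`, which
acts through `θ₁₂` and `V`, both sides pick up the factor `z` of `γ_z(t(x)) = z t(x)`. It then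
holds on all of `𝒪(Y₁)` because the set of intertwined `T` is a closed *-subalgebra.
Closedness needs the left action to be bounded; as the inner product of a correspondence is only
assumed to satisfy `‖x‖² = ‖⟨x, x⟩‖`, this boundedness is derived from Gelfand's spectral radius
formula rather than from positivity. -/

open scoped CStarAlgebra

lemma NonUnitalAlgHom.spectralRadius_apply_le {D : Type*} [NormedRing D] [NormedAlgebra ℂ D]
    [CompleteSpace D] (ψ : A →ₙₐ[ℂ] D) {S : A} (hS : IsSelfAdjoint S) :
    spectralRadius ℂ (ψ S) ≤ ‖S‖₊ :=
  calc spectralRadius ℂ (ψ S)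
      = spectralRadius ℂ (Unitization.lift ψ (S : Unitization ℂ A)) := by simp
    _ ≤ spectralRadius ℂ (S : Unitization ℂ A) :=
      iSup_le_iSup_of_subset (AlgHom.spectrum_apply_subset _ _)
    _ = ‖S‖₊ := by rw [(hS.inr ℂ).spectralRadius_eq_nnnorm, Unitization.nnnorm_inr]

lemma spectrum.ofReal_le_spectralRadius_of_two_pow_le {D : Type*} [NormedRing D]
    [NormedAlgebra ℂ D] [CompleteSpace D] (b : D) {x : ℝ} (hx : 0 ≤ x)
    (h : ∀ k : ℕ, x ^ 2 ^ k ≤ ‖b ^ 2 ^ k‖) :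
    ENNReal.ofReal x ≤ spectralRadius ℂ b := by
  have hlim := (spectrum.pow_nnnorm_pow_one_div_tendsto_nhds_spectralRadius b).comp
    (tendsto_pow_atTop_atTop_of_one_lt one_lt_two)
  refine ge_of_tendsto' hlim fun k => ?_
  simp only [Function.comp_apply, Nat.cast_pow, Nat.cast_ofNat, one_div]
  rw [ENNReal.le_rpow_inv_iff (by positivity), ← Nat.cast_ofNat, ← Nat.cast_pow,
    ENNReal.rpow_natCast, ← ENNReal.ofReal_pow hx,
    ENNReal.ofReal_le_iff_le_toReal ENNReal.coe_ne_top, ENNReal.coe_toReal, coe_nnnorm]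
  exact h k

namespace Corr

variable (W : Corr A)

@[simp] lemma inner_zero_right (x : W.X) : W.inner x 0 = 0 := by
  simpa using W.inner_smul_right 0 x 0

@[simp] lemma inner_add_left (x y z : W.X) :
    W.inner (x + y) z = W.inner x z + W.inner y z := by
  rw [← W.inner_star, W.inner_add_right, star_add, W.inner_star, W.inner_star]

@[simp] lemma inner_smul_left (c : ℂ) (x y : W.X) :
    W.inner (c • x) y = star c • W.inner x y := by
  rw [← W.inner_star, W.inner_smul_right, star_smul, W.inner_star]

@[simp] lemma inner_zero_left (y : W.X) : W.inner 0 y = 0 := by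
  rw [← W.inner_star, inner_zero_right, star_zero]

def innerRight (x : W.X) : W.X →ₗ[ℂ] A where
  toFun := W.inner x
  map_add' := W.inner_add_right x
  map_smul' c := W.inner_smul_right c x

lemma inner_sub_right (x y z : W.X) : W.inner x (y - z) = W.inner x y - W.inner x z :=
  map_sub (W.innerRight x) y z

lemma eq_zero_of_inner_self_eq_zero {x : W.X} (h : W.inner x x = 0) : x = 0 := by
  simpa [h] using W.norm_eq x

lemma ext_inner_left {u v : W.X} (h : ∀ η, W.inner η u = W.inner η v) : u = v :=
  sub_eq_zero.mp <| W.eq_zero_of_inner_self_eq_zero <| by rw [W.inner_sub_right, h, sub_self]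

lemma inner_smul_add_self (c : ℂ) (x y : W.X) :
    W.inner (c • x + y) (c • x + y) =
      (star c * c) • W.inner x x + star c • W.inner x y + c • W.inner y x + W.inner y y := by
  simp only [inner_add_left, W.inner_add_right, inner_smul_left, W.inner_smul_right]
  module

lemma norm_inner_le_sq (x y : W.X) : ‖W.inner x y‖ ≤ (‖x‖ + ‖y‖) ^ 2 := by
  set P : ℂ → A := fun c => W.inner (c • x + y) (c • x + y)
  have hpol : (4 : ℂ) • W.inner x y =
      P 1 - P (-1) + Complex.I • (P Complex.I - P (-Complex.I)) := by
    simp only [P, inner_smul_add_self, Complex.star_def, map_neg, Complex.conj_I, map_one]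
    linear_combination (norm := module) Complex.I_sq • ((2 : ℂ) • (W.inner x y - W.inner y x))
  have hP : ∀ c : ℂ, ‖c‖ = 1 → ‖P c‖ ≤ (‖x‖ + ‖y‖) ^ 2 := fun c hc => by
    rw [← W.norm_eq]
    gcongr
    simpa [norm_smul, hc] using norm_add_le (c • x) y
  have h4 : 4 * ‖W.inner x y‖ ≤ 4 * (‖x‖ + ‖y‖) ^ 2 :=
    calc 4 * ‖W.inner x y‖ = ‖(4 : ℂ) • W.inner x y‖ := by simp [norm_smul]
      _ ≤ ‖P 1 - P (-1)‖ + ‖P Complex.I - P (-Complex.I)‖ := by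
        rw [hpol, ← one_mul ‖P Complex.I - _‖, ← Complex.norm_I, ← norm_smul]
        exact norm_add_le _ _
      _ ≤ ‖P 1‖ + ‖P (-1)‖ + (‖P Complex.I‖ + ‖P (-Complex.I)‖) :=
        add_le_add (norm_sub_le _ _) (norm_sub_le _ _)
      _ ≤ 4 * (‖x‖ + ‖y‖) ^ 2 := by
        linarith [hP 1 (by simp), hP (-1) (by simp), hP Complex.I (by simp),
          hP (-Complex.I) (by simp)]
  linarith

lemma exists_norm_inner_le (x : W.X) : ∃ K, ∀ y, ‖W.inner x y‖ ≤ K * ‖y‖ :=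
  LinearMap.bound_of_ball_bound one_pos ((‖x‖ + 1) ^ 2) (W.innerRight x) fun y hy => by
    have hy : ‖y‖ ≤ 1 := (mem_ball_zero_iff.mp hy).le
    exact (W.norm_inner_le_sq x y).trans (by gcongr)

lemma continuous_inner_right (x : W.X) : Continuous (W.inner x) :=
  let ⟨K, hK⟩ := W.exists_norm_inner_le x
  AddMonoidHomClass.continuous_of_bound (W.innerRight x) K hK

lemma continuous_inner_left (y : W.X) : Continuous fun x => W.inner x y := by
  simpa only [W.inner_star] using (W.continuous_inner_right y).star

def lactHom : A →ₙₐ[ℂ] (W.X →L[ℂ] W.X) where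
  toFun := W.lactL
  map_smul' := W.lact_smul
  map_zero' := by simpa using W.lact_smul 0 0
  map_add' := W.lact_add
  map_mul' := W.lact_mul

lemma ofReal_norm_apply_div_le_spectralRadius (B : W.X →L[ℂ] W.X)
    (hB : ∀ ζ ζ', W.inner (B ζ) ζ' = W.inner ζ (B ζ')) {ξ : W.X} {K : ℝ} (hK : 0 < K)
    (hξ : ‖ξ‖ ≤ K) (hinner : ∀ ζ, ‖W.inner ξ ζ‖ ≤ K * ‖ζ‖) :
    ENNReal.ofReal (‖B ξ‖ / K) ≤ spectralRadius ℂ B := by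
  have h_symm : ∀ (n : ℕ) ζ ζ', W.inner ((B ^ n) ζ) ζ' = W.inner ζ ((B ^ n) ζ') := by
    intro n
    induction n with
    | zero => simp
    | succ n ih =>
      intro ζ ζ'
      rw [pow_succ, mul_apply_eq_comp, ih, hB, ← mul_apply_eq_comp, ← pow_succ', pow_succ]
  have h_sq : ∀ n : ℕ, (‖(B ^ n) ξ‖ / K) ^ 2 ≤ ‖(B ^ (2 * n)) ξ‖ / K := by
    intro n
    have h : ‖(B ^ n) ξ‖ ^ 2 = ‖W.inner ξ ((B ^ (2 * n)) ξ)‖ := by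
      rw [W.norm_eq, h_symm, two_mul, pow_add, mul_apply_eq_comp]
    rw [div_pow, h, sq, div_le_div_iff₀ (by positivity) hK]
    nlinarith [hinner ((B ^ (2 * n)) ξ), norm_nonneg ((B ^ (2 * n)) ξ)]
  have h_pow : ∀ k : ℕ, (‖B ξ‖ / K) ^ 2 ^ k ≤ ‖(B ^ 2 ^ k) ξ‖ / K := by
    intro k
    induction k with
    | zero => simp
    | succ k ih =>
      calc (‖B ξ‖ / K) ^ 2 ^ (k + 1) = ((‖B ξ‖ / K) ^ 2 ^ k) ^ 2 := by rw [pow_succ, pow_mul]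
        _ ≤ (‖(B ^ 2 ^ k) ξ‖ / K) ^ 2 := by gcongr
        _ ≤ ‖(B ^ (2 * 2 ^ k)) ξ‖ / K := h_sq _
        _ = ‖(B ^ 2 ^ (k + 1)) ξ‖ / K := by rw [← pow_succ']
  refine spectrum.ofReal_le_spectralRadius_of_two_pow_le B (by positivity)
    fun k => (h_pow k).trans ?_
  rw [div_le_iff₀ hK]
  exact ((B ^ 2 ^ k).le_opNorm ξ).trans (by gcongr)

lemma exists_norm_lactL_apply_le (ξ : W.X) : ∃ K, ∀ T, ‖W.lactL T ξ‖ ≤ K * ‖T‖ := by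
  obtain ⟨K₀, hK₀⟩ := W.exists_norm_inner_le ξ
  set K := max (max K₀ ‖ξ‖) 1
  have hK : 0 < K := lt_of_lt_of_le one_pos (le_max_right _ _)
  have hinner : ∀ ζ, ‖W.inner ξ ζ‖ ≤ K * ‖ζ‖ := fun ζ =>
    (hK₀ ζ).trans (by gcongr; exact (le_max_left _ _).trans (le_max_left _ _))
  have h_sq : ∀ T, ‖W.lactL T ξ‖ ^ 2 ≤ K * ‖W.lactL (star T * T) ξ‖ := fun T => by
    rw [W.norm_eq, W.lact_adjoint, W.lact_mul]
    exact hinner _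
  have h_sa : ∀ S : A, IsSelfAdjoint S → ‖W.lactL S ξ‖ ≤ K * ‖S‖ := by
    intro S hS
    have h := (W.ofReal_norm_apply_div_le_spectralRadius (W.lactL S)
      (fun ζ ζ' => by rw [W.lact_adjoint, hS.star_eq]) hK
      ((le_max_right _ _).trans (le_max_left _ _)) hinner).trans
      (W.lactHom.spectralRadius_apply_le hS)
    rw [ENNReal.ofReal_le_iff_le_toReal ENNReal.coe_ne_top, ENNReal.coe_toReal, coe_nnnorm,
      div_le_iff₀ hK] at h
    linarith
  refine ⟨K, fun T => le_of_pow_le_pow_left₀ two_ne_zero (by positivity) ?_⟩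
  calc ‖W.lactL T ξ‖ ^ 2 ≤ K * ‖W.lactL (star T * T) ξ‖ := h_sq T
    _ ≤ K * (K * ‖star T * T‖) := by gcongr; exact h_sa _ (.star_mul_self T)
    _ = (K * ‖T‖) ^ 2 := by rw [CStarRing.norm_star_mul_self]; ring

lemma continuous_lactL_apply (ξ : W.X) : Continuous fun T => W.lactL T ξ :=
  let ⟨K, hK⟩ := W.exists_norm_lactL_apply_le ξ
  continuous_of_linear_of_bound (fun a b => by rw [W.lact_add]; rfl)
    (fun c a => by rw [W.lact_smul]; rfl) hK

lemma map_lactL_star {Z : Corr B} (g : B →⋆ₙₐ[ℂ] B) {Ψ : Z.X → Z.X}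
    (hsurj : Function.Surjective Ψ) (hinner : ∀ ξ η, Z.inner (Ψ ξ) (Ψ η) = g (Z.inner ξ η))
    {p : B} (hp : ∀ ξ, Ψ (Z.lactL p ξ) = Z.lactL (g p) (Ψ ξ)) (ξ : Z.X) :
    Ψ (Z.lactL (star p) ξ) = Z.lactL (g (star p)) (Ψ ξ) := by
  refine Z.ext_inner_left fun η => ?_
  obtain ⟨η, rfl⟩ := hsurj η
  calc Z.inner (Ψ η) (Ψ (Z.lactL (star p) ξ))
      = g (Z.inner (Z.lactL p η) ξ) := by rw [hinner, Z.lact_adjoint]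
    _ = Z.inner (Ψ η) (Z.lactL (g (star p)) (Ψ ξ)) := by
      rw [← hinner, hp, Z.lact_adjoint, map_star]

end Corr

def IsStarHom.toNonUnitalStarAlgHom {π : A → B} (h : IsStarHom π) : A →⋆ₙₐ[ℂ] B where
  toFun := π
  map_smul' := h.map_smul
  map_zero' := by simpa using h.map_smul 0 0
  map_add' := h.map_add
  map_mul' := h.map_mul
  map_star' := h.map_star

@[simp] lemma IsStarHom.coe_toNonUnitalStarAlgHom {π : A → B} (h : IsStarHom π) :
    ⇑h.toNonUnitalStarAlgHom = π := rfl

def IsCLMap.toContinuousLinearMap {E F : Type u} [NormedAddCommGroup E] [NormedSpace ℂ E]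
    [NormedAddCommGroup F] [NormedSpace ℂ F] {f : E → F} (hf : IsCLMap f) : E →L[ℂ] F where
  toFun := f
  map_add' := hf.map_add
  map_smul' := hf.map_smul
  cont := hf.cont

@[simp] lemma IsCLMap.coe_toContinuousLinearMap {E F : Type u} [NormedAddCommGroup E]
    [NormedSpace ℂ E] [NormedAddCommGroup F] [NormedSpace ℂ F] {f : E → F} (hf : IsCLMap f) :
    ⇑hf.toContinuousLinearMap = f := rfl

lemma IsTensor.continuousLinearMap_ext {W V T : Corr A} {m : W.X → V.X → T.X}
    (hT : IsTensor W V T m) {F : Type*} [NormedAddCommGroup F] [NormedSpace ℂ F]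
    {f g : T.X →L[ℂ] F} (h : ∀ x y, f (m x y) = g (m x y)) : f = g :=
  ContinuousLinearMap.ext_on (dense_iff_closure_eq.mpr hT.dense)
    (by rintro _ ⟨x, y, rfl⟩; exact h x y)

namespace CPAlg

variable {W : Corr A} (C : CPAlg W)

lemma starAlgHom_ext {D : Type*} [NonUnitalCStarAlgebra D] {f g : C.O →⋆ₙₐ[ℂ] D}
    (hπ : ∀ a, f (C.π a) = g (C.π a)) (ht : ∀ x, f (C.t x) = g (C.t x)) : f = g := by
  ext p
  refine C.gen {p | f p = g p} (isClosed_eq (map_continuous f) (map_continuous g)) hπ ht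
    ?_ ?_ ?_ ?_ p <;> intros <;> simp_all [map_star]

theorem map_lactL_of_generators {Z : Corr C.O} (g : C.O →⋆ₙₐ[ℂ] C.O) (Ψ : Z.X →L[ℂ] Z.X)
    (hsurj : Function.Surjective Ψ) (hinner : ∀ ξ η, Z.inner (Ψ ξ) (Ψ η) = g (Z.inner ξ η))
    (hπ : ∀ a ξ, Ψ (Z.lactL (C.π a) ξ) = Z.lactL (g (C.π a)) (Ψ ξ))
    (ht : ∀ x ξ, Ψ (Z.lactL (C.t x) ξ) = Z.lactL (g (C.t x)) (Ψ ξ)) (T : C.O) (ξ : Z.X) :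
    Ψ (Z.lactL T ξ) = Z.lactL (g T) (Ψ ξ) := by
  have hclosed : IsClosed {T : C.O | ∀ ξ, Ψ (Z.lactL T ξ) = Z.lactL (g T) (Ψ ξ)} := by
    simp only [Set.ofPred_forall]
    exact isClosed_iInter fun ξ => isClosed_eq (Ψ.continuous.comp (Z.continuous_lactL_apply ξ))
      ((Z.continuous_lactL_apply _).comp (map_continuous g))
  refine C.gen _ hclosed hπ ht ?_ ?_ ?_ (fun p hp => Z.map_lactL_star g hsurj hinner hp) T ξ
  · intro p q (hp : ∀ ξ, _) (hq : ∀ ξ, _) ξ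
    simp only [map_add, Z.lact_add, add_apply, hp, hq]
  · intro p q (hp : ∀ ξ, _) (hq : ∀ ξ, _) ξ
    simp only [map_mul, Z.lact_mul, ContinuousLinearMap.comp_apply, hp, hq]
  · intro c p (hp : ∀ ξ, _) ξ
    simp only [map_smul, Z.lact_smul, smul_apply, hp]

end CPAlg

lemma IsGaugeAut.apply_star_apply {W : Corr A} {C : CPAlg W} {γ : ℂ → C.O → C.O}
    (hγ : IsGaugeAut C γ) {z : ℂ} (hz : ‖z‖ = 1) (p : C.O) : γ (star z) (γ z p) = p := by
  obtain ⟨hz_hom, -, hz_t, hz_π⟩ := hγ z hz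
  obtain ⟨hz'_hom, -, hz'_t, hz'_π⟩ := hγ (star z) (by rwa [norm_star])
  have hcomp : hz'_hom.toNonUnitalStarAlgHom.comp hz_hom.toNonUnitalStarAlgHom =
      NonUnitalStarAlgHom.id ℂ C.O := by
    refine C.starAlgHom_ext (fun a => ?_) fun x => ?_ <;>
      simp only [NonUnitalStarAlgHom.comp_apply, IsStarHom.coe_toNonUnitalStarAlgHom, hz_π,
        hz'_π, hz_t, hz'_hom.map_smul, hz'_t, smul_smul, NonUnitalStarAlgHom.coe_id, id_eq]
    rw [Complex.star_def, Complex.mul_conj', hz]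
    simp
  exact congr($hcomp p)

namespace MixedMod

variable {W : Corr A} {O : Type u} [NonUnitalCStarAlgebra O] {πA : A → O} {Z : Corr O}
  {m : W.X → O → Z.X}

lemma dense_span (hm : MixedMod W O πA Z m) :
    Dense (Submodule.span ℂ {ζ | ∃ x S, ζ = m x S} : Set Z.X) :=
  dense_iff_closure_eq.mpr hm.dense

lemma continuousLinearMap_ext (hm : MixedMod W O πA Z m) {F : Type*} [NormedAddCommGroup F]
    [NormedSpace ℂ F] {f g : Z.X →L[ℂ] F} (h : ∀ x S, f (m x S) = g (m x S)) : f = g :=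
  ContinuousLinearMap.ext_on hm.dense_span (by rintro _ ⟨x, S, rfl⟩; exact h x S)

lemma inner_snd_eq_of_mem_span (hm : MixedMod W O πA Z m) (g : O →⋆ₙₐ[ℂ] O)
    (hg : ∀ a, g (πA a) = πA a) {p q : Z.X × Z.X}
    (hp : p ∈ Submodule.span ℂ {p | ∃ x S, p = (m x S, m x (g S))})
    (hq : q ∈ Submodule.span ℂ {p | ∃ x S, p = (m x S, m x (g S))}) :
    Z.inner p.2 q.2 = g (Z.inner p.1 q.1) := by
  induction hp, hq using Submodule.span_induction₂ with
  | mem_mem p q hp hq =>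
    obtain ⟨x, S, rfl⟩ := hp
    obtain ⟨y, T, rfl⟩ := hq
    simp [hm.inner, hg, map_star]
  | zero_left | zero_right => simp
  | add_left | add_right | smul_left | smul_right =>
    simp_all [Z.inner_add_right, Z.inner_smul_right]

theorem exists_lift (hm : MixedMod W O πA Z m) (g : O →⋆ₙₐ[ℂ] O)
    (hg : ∀ a, g (πA a) = πA a) :
    ∃ Ψ : Z.X →L[ℂ] Z.X, (∀ x S, Ψ (m x S) = m x (g S)) ∧
      ∀ ξ η, Z.inner (Ψ ξ) (Ψ η) = g (Z.inner ξ η) := by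
  -- `M` is the graph of `1 ⊗ g` on the span of the elementary tensors.
  set M := Submodule.span ℂ {p : Z.X × Z.X | ∃ x S, p = (m x S, m x (g S))}
  let e : M →ₗ[ℂ] Z.X := (LinearMap.fst ℂ Z.X Z.X).comp M.subtype
  let f : M →ₗ[ℂ] Z.X := (LinearMap.snd ℂ Z.X Z.X).comp M.subtype
  have hgen : ∀ x S, ((m x S, m x (g S)) : Z.X × Z.X) ∈ M :=
    fun x S => Submodule.subset_span ⟨x, S, rfl⟩
  have hnorm : ∀ p : M, ‖f p‖ ≤ 1 * ‖e p‖ := by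
    intro p
    rw [one_mul]
    refine le_of_pow_le_pow_left₀ two_ne_zero (norm_nonneg _) ?_
    rw [Z.norm_eq, Z.norm_eq]
    simp only [f, e, LinearMap.comp_apply, LinearMap.fst_apply, LinearMap.snd_apply,
      Submodule.coe_subtype, hm.inner_snd_eq_of_mem_span g hg p.2 p.2]
    exact NonUnitalStarAlgHom.norm_apply_le g _
  have hdense : DenseRange e := by
    refine hm.dense_span.mono ?_
    rw [← LinearMap.coe_range, SetLike.coe_subset_coe, Submodule.span_le]
    rintro _ ⟨x, S, rfl⟩
    exact ⟨⟨_, hgen x S⟩, rfl⟩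
  set Ψ := f.extendOfNorm e
  have hΨ : ∀ p : M, Ψ (e p) = f p := LinearMap.extendOfNorm_eq hdense ⟨1, hnorm⟩
  refine ⟨Ψ, fun x S => hΨ ⟨_, hgen x S⟩, fun ξ η => ?_⟩
  refine hdense.induction_on ξ (isClosed_eq ((Z.continuous_inner_left _).comp Ψ.continuous)
    ((map_continuous g).comp (Z.continuous_inner_left _))) fun p => ?_
  refine hdense.induction_on η (isClosed_eq ((Z.continuous_inner_right _).comp Ψ.continuous)
    ((map_continuous g).comp (Z.continuous_inner_right _))) fun q => ?_
  rw [hΨ, hΨ]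
  exact hm.inner_snd_eq_of_mem_span g hg p.2 q.2

lemma bijective_of_lift (hm : MixedMod W O πA Z m) {g g' : O → O}
    (hg : ∀ S, g' (g S) = S) (hg' : ∀ S, g (g' S) = S) {Ψ Ψ' : Z.X →L[ℂ] Z.X}
    (hΨ : ∀ x S, Ψ (m x S) = m x (g S)) (hΨ' : ∀ x S, Ψ' (m x S) = m x (g' S)) :
    Function.Bijective Ψ := by
  have hl : Ψ' ∘L Ψ = .id ℂ Z.X := hm.continuousLinearMap_ext fun x S => by simp [hΨ, hΨ', hg]
  have hr : Ψ ∘L Ψ' = .id ℂ Z.X := hm.continuousLinearMap_ext fun x S => by simp [hΨ, hΨ', hg']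
  exact Function.bijective_iff_has_inverse.mpr
    ⟨Ψ', fun ξ => congr($hl ξ), fun ξ => congr($hr ξ)⟩

end MixedMod

namespace ECorrData

variable {Y1 Yi T T' : Corr A} {mT : Y1.X → Yi.X → T.X} {mT' : Yi.X → Y1.X → T'.X}
  {θ : T.X → T'.X} {C : CPAlg Y1} {Z : Corr C.O} {m : Yi.X → C.O → Z.X}

lemma map_lactL_π (hZ : ECorrData Y1 Yi T mT T' mT' θ C Z m) {g : C.O →⋆ₙₐ[ℂ] C.O}
    (hgπ : ∀ a, g (C.π a) = C.π a) {Ψ : Z.X →L[ℂ] Z.X} (hΨ : ∀ y S, Ψ (m y S) = m y (g S))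
    (a : A) (ξ : Z.X) : Ψ (Z.lactL (C.π a) ξ) = Z.lactL (g (C.π a)) (Ψ ξ) := by
  rw [hgπ]
  have h : Ψ ∘L Z.lactL (C.π a) = Z.lactL (C.π a) ∘L Ψ :=
    hZ.mod.continuousLinearMap_ext fun y S => by simp [hZ.lact_pi, hΨ]
  exact congr($h ξ)

lemma map_lactL_t (hZ : ECorrData Y1 Yi T mT T' mT' θ C Z m) (hT' : IsTensor Yi Y1 T' mT')
    {g : C.O →⋆ₙₐ[ℂ] C.O} {z : ℂ} (hgt : ∀ x, g (C.t x) = z • C.t x) {Ψ : Z.X →L[ℂ] Z.X}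
    (hΨ : ∀ y S, Ψ (m y S) = m y (g S)) (x : Y1.X) (ξ : Z.X) :
    Ψ (Z.lactL (C.t x) ξ) = Z.lactL (g (C.t x)) (Ψ ξ) := by
  obtain ⟨μ, hμ, hμm, hμt⟩ := hZ.lact_t
  have hΨμ : ∀ S, Ψ ∘L (hμ S).toContinuousLinearMap = z • (hμ (g S)).toContinuousLinearMap :=
    fun S => hT'.continuousLinearMap_ext fun y u => by
      simp [hμm, hΨ, hgt, smul_mul_assoc, hZ.mod.smul_right]
  have h : Ψ ∘L Z.lactL (C.t x) = Z.lactL (g (C.t x)) ∘L Ψ :=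
    hZ.mod.continuousLinearMap_ext fun y S => by
      simpa [hμt, hΨ, hgt, Z.lact_smul] using congr($(hΨμ S) (θ (mT x y)))
  exact congr($h ξ)

end ECorrData

theorem gauge_pair_is_correspondence_automorphism_general
    {A : Type u} [NonUnitalCStarAlgebra A]
    (Y1 Y2 : Corr A)
    (T12 T21 : Corr A)
    (m12 : Y1.X → Y2.X → T12.X) (m21 : Y2.X → Y1.X → T21.X)
    (hT21 : IsTensor Y2 Y1 T21 m21)
    (θ12 : T12.X → T21.X)
    (C : CPAlg Y1) (γ : ℂ → C.O → C.O) (hγ : IsGaugeAut C γ)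
    (Z : Corr C.O) (mm : Y2.X → C.O → Z.X)
    (hZ : ECorrData Y1 Y2 T12 m12 T21 m21 θ12 C Z mm) :
    ∀ z : ℂ, ‖z‖ = 1 →
      ∃ Ψ : Z.X → Z.X, IsCLMap Ψ ∧
        (∀ y S, Ψ (mm y S) = mm y (γ z S)) ∧
        Function.Bijective Ψ ∧
        (∀ (T : C.O) (ξ : Z.X), Ψ (Z.lactL T ξ) = Z.lactL (γ z T) (Ψ ξ)) ∧
        ∀ ξ η, Z.inner (Ψ ξ) (Ψ η) = γ z (Z.inner ξ η) := by
  intro z hz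
  have hz' : ‖star z‖ = 1 := by rwa [norm_star]
  obtain ⟨hγ_hom, -, hγ_t, hγ_π⟩ := hγ z hz
  obtain ⟨hγ'_hom, -, -, hγ'_π⟩ := hγ (star z) hz'
  obtain ⟨Ψ, hΨ, hΨ_inner⟩ := hZ.mod.exists_lift hγ_hom.toNonUnitalStarAlgHom hγ_π
  obtain ⟨Ψ', hΨ', -⟩ := hZ.mod.exists_lift hγ'_hom.toNonUnitalStarAlgHom hγ'_π
  have hbij : Function.Bijective Ψ := hZ.mod.bijective_of_lift (hγ.apply_star_apply hz)
    (by simpa using hγ.apply_star_apply hz') hΨ hΨ'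
  refine ⟨Ψ, ⟨map_add Ψ, map_smul Ψ, Ψ.continuous⟩, hΨ, hbij, fun T ξ => ?_, hΨ_inner⟩
  exact C.map_lactL_of_generators hγ_hom.toNonUnitalStarAlgHom Ψ hbij.2 hΨ_inner
    (hZ.map_lactL_π hγ_π hΨ) (hZ.map_lactL_t hT21 hγ_t hΨ) T ξ

/-- For the `𝒪(Y₁)`-correspondence `ℰY₂ = Y₂ ⊗_A 𝒪(Y₁)`
(with left action determined by `θ₁₂`) and every `z ∈ 𝕋`, the pair
`(γ_z, 1_{Y₂} ⊗ γ_z)` is a C*-correspondence automorphism of `ℰY₂`: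
`1 ⊗ γ_z` intertwines the left action along `γ_z`, transforms inner
products by `γ_z`, and is surjective (indeed bijective). -/
theorem gauge_pair_is_correspondence_automorphism
    {A : Type u} [NonUnitalCStarAlgebra A]
    (Y1 Y2 : Corr A) (h1 : Y1.Reg) (h2 : Y2.Reg)
    (T12 T21 : Corr A)
    (m12 : Y1.X → Y2.X → T12.X) (m21 : Y2.X → Y1.X → T21.X)
    (hT12 : IsTensor Y1 Y2 T12 m12) (hT21 : IsTensor Y2 Y1 T21 m21)
    (θ12 : T12.X → T21.X) (hθ : IsCorrIsoFun T12 T21 θ12)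
    (C : CPAlg Y1) (γ : ℂ → C.O → C.O) (hγ : IsGaugeAut C γ)
    (Z : Corr C.O) (mm : Y2.X → C.O → Z.X)
    (hZ : ECorrData Y1 Y2 T12 m12 T21 m21 θ12 C Z mm) :
    ∀ z : ℂ, ‖z‖ = 1 →
      ∃ Ψ : Z.X → Z.X, IsCLMap Ψ ∧
        (∀ y S, Ψ (mm y S) = mm y (γ z S)) ∧
        Function.Bijective Ψ ∧
        (∀ (T : C.O) (ξ : Z.X), Ψ (Z.lactL T ξ) = Z.lactL (γ z T) (Ψ ξ)) ∧
        ∀ ξ η, Z.inner (Ψ ξ) (Ψ η) = γ z (Z.inner ξ η) :=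
  gauge_pair_is_correspondence_automorphism_general Y1 Y2 T12 T21 m12 m21 hT21 θ12 C γ hγ Z mm hZ
end
end

section
/- With the notation of the ℕ²-case: let τ¹ be the 𝕋-action on O(ℰY_2) induced by the correspondence automorphisms (γ_z, 1_{Y_2} ⊗ γ_z) of ℰY_2, and τ² the 𝕋-action induced by the automorphisms (1_{O_{Y_1}}, β_z) where β_z(y ⊗ S) = z(y ⊗ S). Then ρ_{(z,w)} := τ²_w τ¹_z defines a strongly continuous action ρ of 𝕋² on O(ℰY_2) (the actions τ¹ and τ² commute) satisfying ρ_{(z,w)}(σ_1(y_1)) = z σ_1(y_1) and ρ_{(z,w)}(σ_2(y_2)) = w σ_2(y_2) for y_1 ∈ Y_1, y_2 ∈ Y_2; hence ρ is compatible with the gauge action of 𝕋² on O_X under the representation ψ. -/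
/- ############################################################
   Common framework: C*-correspondences, interior tensor products
   (characterized relationally), representations, Cuntz–Pimsner algebras,
   product systems over ℕ^k, generating systems, and the ℰ / ℛθ
   constructions of the paper (characterized relationally).
   ############################################################ -/

noncomputable section

open Filter Topology

universe u

variable {A : Type u} [NonUnitalCStarAlgebra A]

variable {B : Type u} [NonUnitalCStarAlgebra B]

/-!
The gauge automorphisms `γ_z` of `𝒪(Y₁)` fix `π(A)` and scale `t(Y₁)` by `z`; `τ¹_z` acts on
`ℰY₂ = Y₂ ⊗ 𝒪(Y₁)` through the right factor and `τ²_w` scales `ℰY₂` by `w`. Everything is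
checked on generators and extended by continuity, since star homomorphisms between
C⋆-algebras are contractive; for the action on the product system one also uses that each
fibre `X_{s+t}` is densely spanned by products `X_s X_t`.

The one genuinely analytic point is `σ₂(y) = t(y ⊗ 1)`, where `y ⊗ 1` only exists as a limit:
along an approximate unit `e` of `𝒪(Y₁)` the vectors `y ⊗ e` converge, because
`‖y ⊗ S‖² ≤ ‖S‖ ‖π⟨y, y⟩ S‖`. As `γ_z` fixes `π⟨y, y⟩`, the vectors `y ⊗ γ_z(e)` have the same
limit, so `τ¹_z` fixes `σ₂(y)`.
-/

theorem dense_span_induction {R E : Type*} [Semiring R] [TopologicalSpace E] [AddCommMonoid E]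
    [Module R E] {s : Set E} (hs : closure (Submodule.span R s : Set E) = Set.univ)
    {P : E → Prop} (mem : ∀ x ∈ s, P x) (zero : P 0) (add : ∀ x y, P x → P y → P (x + y))
    (smul : ∀ (c : R) x, P x → P (c • x)) (isClosed : IsClosed {x | P x}) (x : E) : P x :=
  Dense.induction (dense_iff_closure_eq.mpr hs)
    (fun _ hy => Submodule.span_induction mem zero (fun a b _ _ => add a b)
      (fun c a _ => smul c a) hy) isClosed x

theorem isClosed_setOf_continuousOn_of_lipschitzWith {P E F : Type*} [TopologicalSpace P]
    [PseudoMetricSpace E] [PseudoMetricSpace F] {K : Set P} {Φ : P → E → F}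
    (hΦ : ∀ p ∈ K, LipschitzWith 1 (Φ p)) :
    IsClosed {x | ContinuousOn (fun p => Φ p x) K} := by
  refine IsSeqClosed.isClosed fun u x hu hx => ?_
  refine TendstoUniformlyOn.continuousOn (F := fun n p => Φ p (u n)) (p := atTop) ?_
    (Frequently.of_forall hu)
  rw [Metric.tendstoUniformlyOn_iff]
  intro ε hε
  filter_upwards [Metric.tendsto_nhds.mp hx ε hε] with n hn p hp
  calc dist (Φ p x) (Φ p (u n)) ≤ dist x (u n) := by simpa using (hΦ p hp).dist_le_mul x (u n)
    _ < ε := by rwa [dist_comm]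

namespace IsStarHom

variable {B C : Type u} [NonUnitalCStarAlgebra B] [NonUnitalCStarAlgebra C] {f : A → B}

def toNonUnitalStarAlgHom_s19 (hf : IsStarHom f) : A →⋆ₙₐ[ℂ] B where
  toFun := f
  map_smul' := hf.map_smul
  map_zero' := by simpa using hf.map_add 0 0
  map_add' := hf.map_add
  map_mul' := hf.map_mul
  map_star' := hf.map_star

theorem map_zero (hf : IsStarHom f) : f 0 = 0 :=
  _root_.map_zero hf.toNonUnitalStarAlgHom_s19

theorem map_sub (hf : IsStarHom f) (a b : A) : f (a - b) = f a - f b :=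
  _root_.map_sub hf.toNonUnitalStarAlgHom_s19 a b

theorem norm_le (hf : IsStarHom f) (a : A) : ‖f a‖ ≤ ‖a‖ :=
  NonUnitalStarAlgHom.norm_apply_le hf.toNonUnitalStarAlgHom_s19 a

theorem lipschitzWith (hf : IsStarHom f) : LipschitzWith 1 f :=
  LipschitzWith.of_dist_le_mul fun a b => by
    simpa [dist_eq_norm, hf.map_sub] using hf.norm_le (a - b)

theorem continuous (hf : IsStarHom f) : Continuous f :=
  hf.lipschitzWith.continuous

theorem comp {g : B → C} (hg : IsStarHom g) (hf : IsStarHom f) : IsStarHom (fun a => g (f a)) :=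
  ⟨fun a b => by rw [hf.map_add, hg.map_add], fun a b => by rw [hf.map_mul, hg.map_mul],
    fun a => by rw [hf.map_star, hg.map_star], fun c a => by rw [hf.map_smul, hg.map_smul]⟩

end IsStarHom

namespace Corr

variable (W : Corr A)

theorem inner_ract_left (x y : W.X) (a : A) : W.inner (W.ract x a) y = star a * W.inner x y := by
  rw [← W.inner_star, W.inner_ract_right, star_mul, W.inner_star]

theorem norm_ract_le (x : W.X) (a : A) : ‖W.ract x a‖ ≤ ‖a‖ * ‖x‖ := by
  refine (pow_le_pow_iff_left₀ (norm_nonneg _) (by positivity) two_ne_zero).mp ?_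
  rw [W.norm_eq, W.inner_ract_right, W.inner_ract_left, mul_pow, W.norm_eq]
  calc ‖star a * W.inner x x * a‖ ≤ ‖star a‖ * ‖W.inner x x‖ * ‖a‖ := norm_mul₃_le
    _ = ‖a‖ ^ 2 * ‖W.inner x x‖ := by rw [norm_star]; ring

theorem continuous_ract_left (a : A) : Continuous fun x => W.ract x a :=
  AddMonoidHomClass.continuous_of_bound
    (AddMonoidHom.mk' (fun x => W.ract x a) fun x y => W.ract_add_left x y a) ‖a‖
    (W.norm_ract_le · a)

end Corr

namespace IsRep

variable {B : Type u} [NonUnitalCStarAlgebra B] {W : Corr A} {π : A → B} {t : W.X → B}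

theorem map_zero (h : IsRep W π t) : t 0 = 0 := by
  simpa using h.t_smul 0 0

theorem norm_le (h : IsRep W π t) (x : W.X) : ‖t x‖ ≤ ‖x‖ := by
  refine (pow_le_pow_iff_left₀ (norm_nonneg _) (norm_nonneg _) two_ne_zero).mp ?_
  rw [sq, ← CStarRing.norm_star_mul_self, h.inner, W.norm_eq]
  exact h.hom.norm_le _

theorem lipschitzWith (h : IsRep W π t) : LipschitzWith 1 t := by
  simpa using AddMonoidHomClass.lipschitz_of_bound (AddMonoidHom.mk' t h.t_add) 1
    (fun x => by simpa using h.norm_le x)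

theorem continuous (h : IsRep W π t) : Continuous t :=
  h.lipschitzWith.continuous

end IsRep

theorem exists_approximateUnit (O : Type u) [NonUnitalCStarAlgebra O] :
    ∃ l : Filter O, l.IsApproximateUnit ∧ ∀ᶠ e in l, ‖e‖ ≤ 1 := by
  let := CStarAlgebra.spectralOrder O
  have := CStarAlgebra.spectralOrderedRing O
  exact ⟨_, (CStarAlgebra.increasingApproximateUnit O).toIsApproximateUnit,
    (CStarAlgebra.increasingApproximateUnit O).eventually_norm⟩

namespace MixedMod

variable {W : Corr A} {O : Type u} [NonUnitalCStarAlgebra O] {πA : A → O} {Z : Corr O}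
  {m : W.X → O → Z.X} (x : W.X)

theorem map_sub (h : MixedMod W O πA Z m) (S S' : O) : m x (S - S') = m x S - m x S' :=
  _root_.map_sub (AddMonoidHom.mk' (m x) (h.add_right x)) S S'

theorem norm_sq_le (h : MixedMod W O πA Z m) (S : O) :
    ‖m x S‖ ^ 2 ≤ ‖S‖ * ‖πA (W.inner x x) * S‖ := by
  rw [Z.norm_eq, h.inner, ← norm_star S]
  exact norm_mul_le _ _

theorem tendsto_zero (h : MixedMod W O πA Z m) {ι : Type*} {l : Filter ι} {S : ι → O} {c : ℝ}
    (hS : ∀ᶠ i in l, ‖S i‖ ≤ c) (hb : Tendsto (fun i => πA (W.inner x x) * S i) l (𝓝 0)) :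
    Tendsto (fun i => m x (S i)) l (𝓝 0) := by
  have hlim : Tendsto (fun i => √(c * ‖πA (W.inner x x) * S i‖)) l (𝓝 0) := by
    have := (Real.continuous_sqrt.tendsto _).comp (hb.norm.const_mul c)
    rwa [norm_zero, mul_zero, Real.sqrt_zero] at this
  refine squeeze_zero_norm' ?_ hlim
  filter_upwards [hS] with i hi
  rw [Real.le_sqrt (norm_nonneg _) (by positivity [(norm_nonneg _).trans hi])]
  exact (h.norm_sq_le x (S i)).trans (by gcongr)

theorem tendsto_of_tendsto_mul (h : MixedMod W O πA Z m) {ι : Type*} {l : Filter ι} {S : ι → O}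
    {T : O} {c : ℝ}
    (hS : ∀ᶠ i in l, ‖S i - T‖ ≤ c)
    (hb : Tendsto (fun i => πA (W.inner x x) * S i) l (𝓝 (πA (W.inner x x) * T))) :
    Tendsto (fun i => m x (S i)) l (𝓝 (m x T)) := by
  have hb' : Tendsto (fun i => πA (W.inner x x) * (S i - T)) l (𝓝 0) := by
    simpa [mul_sub] using hb.sub_const (πA (W.inner x x) * T)
  simpa [h.map_sub] using (h.tendsto_zero x hS hb').add_const (m x T)

theorem continuous_right (h : MixedMod W O πA Z m) : Continuous (m x) :=
  continuous_iff_continuousAt.mpr fun T => h.tendsto_of_tendsto_mul x (c := 1)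
    (eventually_of_mem (Metric.closedBall_mem_nhds T one_pos) fun S hS => by
      rwa [Metric.mem_closedBall, dist_eq_norm] at hS)
    ((continuous_const_mul _).tendsto T)

variable {l : Filter O}

theorem exists_tendsto_approximateUnit (h : MixedMod W O πA Z m) (hl : l.IsApproximateUnit)
    (hball : ∀ᶠ e in l, ‖e‖ ≤ 1) :
    ∃ ξ, Tendsto (m x) l (𝓝 ξ) := by
  have := hl.neBot
  rw [← cauchy_map_iff_exists_tendsto, IsUniformAddGroup.cauchy_map_iff_tendsto]
  refine ⟨inferInstance, ?_⟩
  set b := πA (W.inner x x)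
  have hb : Tendsto (fun p : O × O => b * (p.1 - p.2)) (l ×ˢ l) (𝓝 0) := by
    simpa [mul_sub] using ((hl.tendsto_mul_left b).comp tendsto_fst).sub
      ((hl.tendsto_mul_left b).comp tendsto_snd)
  simpa [h.map_sub] using h.tendsto_zero x (c := 2)
    ((hball.prod_mk hball).mono fun p hp => (norm_sub_le _ _).trans (by linarith [hp.1, hp.2])) hb

theorem ract_eq_of_tendsto (h : MixedMod W O πA Z m) (hl : l.IsApproximateUnit)
    (hball : ∀ᶠ e in l, ‖e‖ ≤ 1)
    {ξ : Z.X} (hξ : Tendsto (m x) l (𝓝 ξ)) (S : O) :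
    Z.ract ξ S = m x S := by
  have := hl.neBot
  have hmul : Tendsto (fun e => m x (e * S)) l (𝓝 (m x S)) := by
    refine h.tendsto_of_tendsto_mul x (c := 2 * ‖S‖) (hball.mono fun e he => ?_) ?_
    · calc ‖e * S - S‖ ≤ ‖e‖ * ‖S‖ + ‖S‖ :=
          (norm_sub_le _ _).trans (by gcongr; exact norm_mul_le _ _)
        _ ≤ 2 * ‖S‖ := by nlinarith [norm_nonneg S]
    · simpa [mul_assoc] using (hl.tendsto_mul_left (πA (W.inner x x))).mul_const S
  refine tendsto_nhds_unique (((Z.continuous_ract_left S).tendsto ξ).comp hξ) ?_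
  simpa [Function.comp_def, h.ract] using hmul

theorem tendsto_comp_of_isStarHom (h : MixedMod W O πA Z m) (hl : l.IsApproximateUnit)
    (hball : ∀ᶠ e in l, ‖e‖ ≤ 1)
    {ξ : Z.X} (hξ : Tendsto (m x) l (𝓝 ξ)) {γ : O → O}
    (hγ : IsStarHom γ) (hγb : γ (πA (W.inner x x)) = πA (W.inner x x)) :
    Tendsto (fun e => m x (γ e)) l (𝓝 ξ) := by
  set b := πA (W.inner x x)
  have hb : Tendsto (fun e => b * (γ e - e)) l (𝓝 0) := by
    have hγe : Tendsto (fun e => γ (b * e)) l (𝓝 b) := by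
      simpa [Function.comp_def, hγb] using (hγ.continuous.tendsto b).comp (hl.tendsto_mul_left b)
    have := hγe.sub (hl.tendsto_mul_left b)
    rw [sub_self] at this
    exact this.congr fun e => by rw [hγ.map_mul, hγb, mul_sub]
  have hdiff := h.tendsto_zero x (c := 2)
    (hball.mono fun e he => (norm_sub_le _ _).trans (by linarith [(hγ.norm_le e).trans he])) hb
  simpa [h.map_sub] using hξ.add hdiff

theorem exists_ract_eq_and_eq {B : Type*} [TopologicalSpace B] [T2Space B] (h : MixedMod W O πA Z m)
    {F T : Z.X → B} (hF : Continuous F) (hT : Continuous T) {γ : O → O} (hγ : IsStarHom γ)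
    (hγb : γ (πA (W.inner x x)) = πA (W.inner x x)) (hFT : ∀ S, F (m x S) = T (m x (γ S))) :
    ∃ ξ, (∀ S, Z.ract ξ S = m x S) ∧ F ξ = T ξ := by
  obtain ⟨l, hl, hball⟩ := exists_approximateUnit O
  have := hl.neBot
  obtain ⟨ξ, hξ⟩ := h.exists_tendsto_approximateUnit x hl hball
  refine ⟨ξ, h.ract_eq_of_tendsto x hl hball hξ, tendsto_nhds_unique ((hF.tendsto ξ).comp hξ) ?_⟩
  exact ((hT.tendsto ξ).comp (h.tendsto_comp_of_isStarHom x hl hball hξ hγ hγb)).congr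
    fun e => (hFT e).symm

end MixedMod

namespace CPAlg

variable {B : Type u} [NonUnitalCStarAlgebra B] {W : Corr A} (C : CPAlg W) {s : Set W.X}

theorem ext_of_isStarHom (hs : closure (Submodule.span ℂ s : Set W.X) = Set.univ)
    {f g : C.O → B} (hf : IsStarHom f) (hg : IsStarHom g) (hπ : ∀ a, f (C.π a) = g (C.π a))
    (ht : ∀ x ∈ s, f (C.t x) = g (C.t x)) (b : C.O) : f b = g b := by
  refine C.gen {b | f b = g b} (isClosed_eq hf.continuous hg.continuous) hπ
    (dense_span_induction (P := fun x => f (C.t x) = g (C.t x)) hs ht ?_ ?_ ?_ ?_) ?_ ?_ ?_ ?_ b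
  · simp only [C.isRep.map_zero, hf.map_zero, hg.map_zero]
  · intro x y hx hy
    simp only [C.isRep.t_add, hf.map_add, hg.map_add, hx, hy]
  · intro c x hx
    simp only [C.isRep.t_smul, hf.map_smul, hg.map_smul, hx]
  · exact isClosed_eq (hf.continuous.comp C.isRep.continuous)
      (hg.continuous.comp C.isRep.continuous)
  · intro p q (hp : f p = g p) (hq : f q = g q)
    show f (p + q) = g (p + q)
    rw [hf.map_add, hg.map_add, hp, hq]
  · intro p q (hp : f p = g p) (hq : f q = g q)
    show f (p * q) = g (p * q)
    rw [hf.map_mul, hg.map_mul, hp, hq]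
  · intro c p (hp : f p = g p)
    show f (c • p) = g (c • p)
    rw [hf.map_smul, hg.map_smul, hp]
  · intro p (hp : f p = g p)
    show f (star p) = g (star p)
    rw [hf.map_star, hg.map_star, hp]

theorem continuousOn_of_generators (hs : closure (Submodule.span ℂ s : Set W.X) = Set.univ)
    {P : Type*} [TopologicalSpace P] {K : Set P} {φ : P → C.O → B}
    (hφ : ∀ p ∈ K, IsStarHom (φ p)) (hπ : ∀ a, ContinuousOn (fun p => φ p (C.π a)) K)
    (ht : ∀ x ∈ s, ContinuousOn (fun p => φ p (C.t x)) K) (b : C.O) :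
    ContinuousOn (fun p => φ p b) K := by
  refine C.gen {b | ContinuousOn (fun p => φ p b) K}
    (isClosed_setOf_continuousOn_of_lipschitzWith fun p hp => (hφ p hp).lipschitzWith) hπ
    (dense_span_induction (P := fun x => ContinuousOn (fun p => φ p (C.t x)) K) hs ht
      ?_ ?_ ?_ ?_) ?_ ?_ ?_ ?_ b
  · exact continuousOn_const.congr fun p hp => by rw [C.isRep.map_zero, (hφ p hp).map_zero]
  · intro x y hx hy
    exact (hx.add hy).congr fun p hp => by rw [C.isRep.t_add, (hφ p hp).map_add]; rfl
  · intro c x hx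
    exact (hx.const_smul c).congr fun p hp => by rw [C.isRep.t_smul, (hφ p hp).map_smul]; rfl
  · exact isClosed_setOf_continuousOn_of_lipschitzWith fun p hp => by
      simpa [Function.comp_def] using (hφ p hp).lipschitzWith.comp C.isRep.lipschitzWith
  · exact fun x y hx hy => (hx.add hy).congr fun p hp => (hφ p hp).map_add x y
  · exact fun x y hx hy => (hx.mul hy).congr fun p hp => (hφ p hp).map_mul x y
  · exact fun c x hx => (hx.const_smul c).congr fun p hp => (hφ p hp).map_smul c x
  · exact fun x hx => hx.star.congr fun p hp => (hφ p hp).map_star x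

theorem continuousOn_gauge {γ : ℂ → C.O → C.O} (hγ : IsGaugeAut C γ) (b : C.O) :
    ContinuousOn (fun z => γ z b) {z | ‖z‖ = 1} :=
  C.continuousOn_of_generators (s := Set.univ) (by simp) (fun z hz => (hγ z hz).1)
    (fun a => continuousOn_const.congr fun z hz => (hγ z hz).2.2.2 a)
    (fun x _ => (continuousOn_id.smul continuousOn_const).congr fun z hz => (hγ z hz).2.2.1 x) b


variable {O : Type u} [NonUnitalCStarAlgebra O] {πA : A → O} {Z : Corr O} {m : W.X → O → Z.X}

theorem commute_of_induced (C : CPAlg Z) (hmod : MixedMod W O πA Z m) {γ : O → O} {w : ℂ}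
    {τ1 τ2 : C.O → C.O} (h1 : IsStarHom τ1) (h2 : IsStarHom τ2)
    (h1π : ∀ T, τ1 (C.π T) = C.π (γ T)) (h1t : ∀ y S, τ1 (C.t (m y S)) = C.t (m y (γ S)))
    (h2π : ∀ T, τ2 (C.π T) = C.π T) (h2t : ∀ ζ, τ2 (C.t ζ) = w • C.t ζ) (b : C.O) :
    τ1 (τ2 b) = τ2 (τ1 b) := by
  refine C.ext_of_isStarHom hmod.dense (h1.comp h2) (h2.comp h1) (fun T => ?_) ?_ b
  · simp only [h1π, h2π]
  · rintro _ ⟨y, S, rfl⟩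
    simp only [h2t, h1.map_smul, h1t]

theorem continuousOn_torus (C : CPAlg Z) (hmod : MixedMod W O πA Z m) {γ : ℂ → O → O}
    (hγ : ∀ T, ContinuousOn (fun z => γ z T) {z | ‖z‖ = 1}) {ρ : ℂ × ℂ → C.O → C.O}
    (hρ : ∀ p : ℂ × ℂ, ‖p.1‖ = 1 ∧ ‖p.2‖ = 1 → IsStarHom (ρ p))
    (hρπ : ∀ p : ℂ × ℂ, ‖p.1‖ = 1 ∧ ‖p.2‖ = 1 → ∀ T, ρ p (C.π T) = C.π (γ p.1 T))
    (hρt : ∀ p : ℂ × ℂ, ‖p.1‖ = 1 ∧ ‖p.2‖ = 1 →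
      ∀ y S, ρ p (C.t (m y S)) = p.2 • C.t (m y (γ p.1 S))) (b : C.O) :
    ContinuousOn (fun p => ρ p b) {p | ‖p.1‖ = 1 ∧ ‖p.2‖ = 1} := by
  have hγK : ∀ T, ContinuousOn (fun p : ℂ × ℂ => γ p.1 T) {p | ‖p.1‖ = 1 ∧ ‖p.2‖ = 1} :=
    fun T => (hγ T).comp continuousOn_fst fun p hp => hp.1
  refine C.continuousOn_of_generators hmod.dense hρ (fun T => ?_) ?_ b
  · exact (C.isRep.hom.continuous.comp_continuousOn (hγK T)).congr fun p hp => hρπ p hp T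
  · rintro _ ⟨y, S, rfl⟩
    exact (continuousOn_snd.smul ((C.isRep.continuous.comp (hmod.continuous_right y))
      |>.comp_continuousOn (hγK S))).congr fun p hp => hρt p hp y S

end CPAlg

namespace PSRep

variable {k : ℕ} {Xs : PSys A k} {B : Type u} [NonUnitalCStarAlgebra B] (r : PSRep Xs B)
  {φ : B → B}

theorem apply_ψ_zero (hπ : ∀ a, φ (r.π a) = r.π a) (x : (Xs.fib 0).X) :
    φ (r.ψ 0 x) = r.ψ 0 x := by
  obtain ⟨a, rfl⟩ := Xs.unit_bij.2 x
  rw [r.ψ_zero, hπ]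

theorem apply_ψ_add (hφ : IsStarHom φ) {s t : Fin k → ℕ} {c d : ℂ}
    (hs : ∀ x, φ (r.ψ s x) = c • r.ψ s x) (ht : ∀ y, φ (r.ψ t y) = d • r.ψ t y)
    (z : (Xs.fib (s + t)).X) : φ (r.ψ (s + t) z) = (c * d) • r.ψ (s + t) z := by
  have hcont := (r.isRep (s + t)).continuous
  refine dense_span_induction (P := fun z => φ (r.ψ (s + t) z) = (c * d) • r.ψ (s + t) z)
    (Xs.isTensor s t).dense ?_ ?_ ?_ ?_
    (isClosed_eq (hφ.continuous.comp hcont) (hcont.const_smul _)) z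
  · rintro _ ⟨x, y, rfl⟩
    rw [← r.mul, hφ.map_mul, hs, ht, smul_mul_smul_comm]
  · rw [(r.isRep _).map_zero, hφ.map_zero, smul_zero]
  · intro x y hx hy
    rw [(r.isRep _).t_add, hφ.map_add, hx, hy, smul_add]
  · intro a x hx
    rw [(r.isRep _).t_smul, hφ.map_smul, hx, smul_comm]

theorem apply_ψ_eq_prod_pow_smul (hφ : IsStarHom φ) (c : Fin k → ℂ)
    (hπ : ∀ a, φ (r.π a) = r.π a) (hgen : ∀ i x, φ (r.ψ (egen i) x) = c i • r.ψ (egen i) x)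
    (s : Fin k → ℕ) (x : (Xs.fib s).X) : φ (r.ψ s x) = (∏ j, c j ^ s j) • r.ψ s x := by
  refine Pi.single_induction (fun s => ∀ x, φ (r.ψ s x) = (∏ j, c j ^ s j) • r.ψ s x) s
    (by simpa using r.apply_ψ_zero hπ) (fun s t hs ht y => ?_) (fun i n => ?_) x
  · simpa [pow_add, Finset.prod_mul_distrib] using r.apply_ψ_add hφ hs ht y
  · suffices ∀ y, φ (r.ψ (Pi.single i n) y) = c i ^ n • r.ψ (Pi.single i n) y by
      simpa [Pi.single_apply] using this
    induction n with
    | zero => rw [Pi.single_zero]; simpa using r.apply_ψ_zero hπ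
    | succ n ih =>
      rw [Pi.single_add (f := fun _ => ℕ) i n 1, pow_succ]
      exact r.apply_ψ_add hφ ih (hgen i)

end PSRep

theorem torus_action_on_CP_of_EY2_general
    {A : Type u} [NonUnitalCStarAlgebra A]
    (G : GenSys A 2) (Xs : PSys A 2) (gen : Generates G Xs)
    (C1 : CPAlg (G.Y 0))
    (Z : Corr C1.O) (mm : (G.Y 1).X → C1.O → Z.X)
    (hZ : ECorr G 0 1 C1 Z mm)
    (C2 : CPAlg Z)
    (γ : ℂ → C1.O → C1.O) (hγ : IsGaugeAut C1 γ)
    (σ2 : (G.Y 1).X → C2.O)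
    (hσ2 : ∀ x ξ, (∀ S, Z.ract ξ S = mm x S) → σ2 x = C2.t ξ)
    (ψ : PSRep Xs C2.O)
    (hψ0 : ψ.π = fun a => C2.π (C1.π a))
    (hψ1 : ∀ x, ψ.ψ (egen 0) ((gen.ι 0).toFun x) = C2.π (C1.t x))
    (hψ2 : ∀ y, ψ.ψ (egen 1) ((gen.ι 1).toFun y) = σ2 y)
    -- `τ¹` is induced by the automorphisms `(γ_z, 1 ⊗ γ_z)` of `ℰY₂`:
    (τ1 : ℂ → C2.O → C2.O)
    (hτ1 : ∀ z : ℂ, ‖z‖ = 1 →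
      IsStarHom (τ1 z) ∧ Function.Bijective (τ1 z) ∧
        (∀ T, τ1 z (C2.π T) = C2.π (γ z T)) ∧
        ∀ y S, τ1 z (C2.t (mm y S)) = C2.t (mm y (γ z S)))
    -- `τ²` is induced by the automorphisms `(1_{𝒪(Y₁)}, β_w)` of `ℰY₂`:
    (τ2 : ℂ → C2.O → C2.O)
    (hτ2 : ∀ w : ℂ, ‖w‖ = 1 →
      IsStarHom (τ2 w) ∧ Function.Bijective (τ2 w) ∧
        (∀ T, τ2 w (C2.π T) = C2.π T) ∧
        ∀ ζ, τ2 w (C2.t ζ) = w • C2.t ζ) :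
    -- the actions commute, so `ρ_{(z,w)} = τ²_w τ¹_z` is a `𝕋²`-action:
    (∀ z w : ℂ, ‖z‖ = 1 → ‖w‖ = 1 →
      ∀ b, τ1 z (τ2 w b) = τ2 w (τ1 z b)) ∧
    -- strong continuity of `ρ`:
    (∀ b : C2.O, ContinuousOn (fun p : ℂ × ℂ => τ2 p.2 (τ1 p.1 b))
      {p | ‖p.1‖ = 1 ∧ ‖p.2‖ = 1}) ∧
    -- `ρ_{(z,w)} σ₁(y₁) = z σ₁(y₁)` and `ρ_{(z,w)} σ₂(y₂) = w σ₂(y₂)`: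
    (∀ z w : ℂ, ‖z‖ = 1 → ‖w‖ = 1 →
      ∀ y1, τ2 w (τ1 z (C2.π (C1.t y1))) = z • C2.π (C1.t y1)) ∧
    (∀ z w : ℂ, ‖z‖ = 1 → ‖w‖ = 1 →
      ∀ y2, τ2 w (τ1 z (σ2 y2)) = w • σ2 y2) ∧
    -- compatibility with the gauge action on `𝒪(X)` under `ψ`:
    ∀ z w : ℂ, ‖z‖ = 1 → ‖w‖ = 1 →
      ∀ s x, τ2 w (τ1 z (ψ.ψ s x)) = (z ^ (s 0) * w ^ (s 1)) • ψ.ψ s x := by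
  have hmod : MixedMod (G.Y 1) C1.O C1.π Z mm := hZ.mod
  have hρσ1 : ∀ z w : ℂ, ‖z‖ = 1 → ‖w‖ = 1 →
      ∀ y1, τ2 w (τ1 z (C2.π (C1.t y1))) = z • C2.π (C1.t y1) := fun z w hz hw y1 => by
    rw [(hτ1 z hz).2.2.1, (hγ z hz).2.2.1, C2.isRep.hom.map_smul, (hτ2 w hw).1.map_smul,
      (hτ2 w hw).2.2.1]
  have hρσ2 : ∀ z w : ℂ, ‖z‖ = 1 → ‖w‖ = 1 → ∀ y2, τ2 w (τ1 z (σ2 y2)) = w • σ2 y2 := by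
    intro z w hz hw y2
    obtain ⟨ξ, hξ, hτ1ξ⟩ := hmod.exists_ract_eq_and_eq y2
      ((hτ1 z hz).1.continuous.comp C2.isRep.continuous) C2.isRep.continuous (hγ z hz).1
      ((hγ z hz).2.2.2 _) ((hτ1 z hz).2.2.2 y2)
    rw [hσ2 y2 ξ hξ, show τ1 z (C2.t ξ) = C2.t ξ from hτ1ξ, (hτ2 w hw).2.2.2]
  refine ⟨fun z w hz hw => ?_, ?_, hρσ1, hρσ2, fun z w hz hw s x => ?_⟩
  · exact C2.commute_of_induced hmod (hτ1 z hz).1 (hτ2 w hw).1 (hτ1 z hz).2.2.1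
      (hτ1 z hz).2.2.2 (hτ2 w hw).2.2.1 (hτ2 w hw).2.2.2
  · refine C2.continuousOn_torus hmod (C1.continuousOn_gauge hγ)
      (fun p hp => (hτ2 _ hp.2).1.comp (hτ1 _ hp.1).1) (fun p hp T => ?_) (fun p hp y S => ?_)
    · rw [(hτ1 _ hp.1).2.2.1, (hτ2 _ hp.2).2.2.1]
    · rw [(hτ1 _ hp.1).2.2.2, (hτ2 _ hp.2).2.2.2]
  · have hφ := (hτ2 w hw).1.comp (hτ1 z hz).1
    have hgen : ∀ i x, τ2 w (τ1 z (ψ.ψ (egen i) x)) = ![z, w] i • ψ.ψ (egen i) x := by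
      intro i x
      obtain ⟨y, rfl⟩ := Function.RightInverse.surjective (gen.ι i).right_inv x
      fin_cases i
      · simpa [hψ1] using hρσ1 z w hz hw y
      · simpa [hψ2] using hρσ2 z w hz hw y
    have hπ : ∀ a, τ2 w (τ1 z (ψ.π a)) = ψ.π a := fun a => by
      simp only [hψ0, (hτ1 z hz).2.2.1, (hγ z hz).2.2.2, (hτ2 w hw).2.2.1]
    simpa [Fin.prod_univ_two] using ψ.apply_ψ_eq_prod_pow_smul hφ ![z, w] hπ hgen s x

/-- In the `ℕ²` setting, let `τ¹` be the `𝕋`-action on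
`𝒪(ℰY₂)` induced by the correspondence automorphisms `(γ_z, 1⊗γ_z)` of
`ℰY₂`, and `τ²` the one induced by `(1, β_z)`, `β_z(y⊗S) = z(y⊗S)`.  Then
`ρ_{(z,w)} = τ²_w τ¹_z` defines a strongly continuous action of `𝕋²` on
`𝒪(ℰY₂)` (the actions commute) with `ρ(σ₁ y) = z σ₁ y` and
`ρ(σ₂ y) = w σ₂ y`; hence `ρ` is compatible with the gauge action of `𝕋²`
on `𝒪(X)` under the representation `ψ`. -/
theorem torus_action_on_CP_of_EY2
    {A : Type u} [NonUnitalCStarAlgebra A]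
    (G : GenSys A 2) (Xs : PSys A 2) (gen : Generates G Xs)
    (C1 : CPAlg (G.Y 0))
    (Z : Corr C1.O) (mm : (G.Y 1).X → C1.O → Z.X)
    (hZ : ECorr G 0 1 C1 Z mm)
    (C2 : CPAlg Z)
    (γ : ℂ → C1.O → C1.O) (hγ : IsGaugeAut C1 γ)
    (σ2 : (G.Y 1).X → C2.O)
    (hσ2 : ∀ x ξ, (∀ S, Z.ract ξ S = mm x S) → σ2 x = C2.t ξ)
    (ψ : PSRep Xs C2.O) (hψcov : PSCPCov ψ)
    (hψ0 : ψ.π = fun a => C2.π (C1.π a))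
    (hψ1 : ∀ x, ψ.ψ (egen 0) ((gen.ι 0).toFun x) = C2.π (C1.t x))
    (hψ2 : ∀ y, ψ.ψ (egen 1) ((gen.ι 1).toFun y) = σ2 y)
    -- `τ¹` is induced by the automorphisms `(γ_z, 1 ⊗ γ_z)` of `ℰY₂`:
    (τ1 : ℂ → C2.O → C2.O)
    (hτ1 : ∀ z : ℂ, ‖z‖ = 1 →
      IsStarHom (τ1 z) ∧ Function.Bijective (τ1 z) ∧
        (∀ T, τ1 z (C2.π T) = C2.π (γ z T)) ∧
        ∀ y S, τ1 z (C2.t (mm y S)) = C2.t (mm y (γ z S)))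
    -- `τ²` is induced by the automorphisms `(1_{𝒪(Y₁)}, β_w)` of `ℰY₂`:
    (τ2 : ℂ → C2.O → C2.O)
    (hτ2 : ∀ w : ℂ, ‖w‖ = 1 →
      IsStarHom (τ2 w) ∧ Function.Bijective (τ2 w) ∧
        (∀ T, τ2 w (C2.π T) = C2.π T) ∧
        ∀ ζ, τ2 w (C2.t ζ) = w • C2.t ζ) :
    -- the actions commute, so `ρ_{(z,w)} = τ²_w τ¹_z` is a `𝕋²`-action:
    (∀ z w : ℂ, ‖z‖ = 1 → ‖w‖ = 1 →
      ∀ b, τ1 z (τ2 w b) = τ2 w (τ1 z b)) ∧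
    -- strong continuity of `ρ`:
    (∀ b : C2.O, ContinuousOn (fun p : ℂ × ℂ => τ2 p.2 (τ1 p.1 b))
      {p | ‖p.1‖ = 1 ∧ ‖p.2‖ = 1}) ∧
    -- `ρ_{(z,w)} σ₁(y₁) = z σ₁(y₁)` and `ρ_{(z,w)} σ₂(y₂) = w σ₂(y₂)`:
    (∀ z w : ℂ, ‖z‖ = 1 → ‖w‖ = 1 →
      ∀ y1, τ2 w (τ1 z (C2.π (C1.t y1))) = z • C2.π (C1.t y1)) ∧
    (∀ z w : ℂ, ‖z‖ = 1 → ‖w‖ = 1 →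
      ∀ y2, τ2 w (τ1 z (σ2 y2)) = w • σ2 y2) ∧
    -- compatibility with the gauge action on `𝒪(X)` under `ψ`:
    ∀ z w : ℂ, ‖z‖ = 1 → ‖w‖ = 1 →
      ∀ s x, τ2 w (τ1 z (ψ.ψ s x)) = (z ^ (s 0) * w ^ (s 1)) • ψ.ψ s x :=
  torus_action_on_CP_of_EY2_general G Xs gen C1 Z mm hZ C2 γ hγ σ2 hσ2 ψ hψ0 hψ1 hψ2 τ1 hτ1 τ2 hτ2
end
end
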